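/- Flatness of Ricci's metric: let U ⊆ ℂ be open and let (f, g) be Weierstrass data on U. Then the function z ↦ ln((−K(z))^{1/4} λ(z)) is harmonic on U, i.e. Δ(ln((−K)^{1/4} λ)) = 0 on U. (Since the Gauss curvature of a conformal metric μ²(dx² + dy²) is −μ⁻²Δ ln μ, this says that Ricci's conformally changed metric 𝒢_Ricci = (−K)^{1/2} λ²(dx² + dy²) is flat.) -/

import Mathlib

/-!
Since `−K = (4|g'| / (|f|(1 + |g|²)²))²`, the factor `(−K)^{1/4} λ` simplifies identically to
`√(|f| |g'|)`, so `ln((−K)^{1/4} λ) = ½ ln |f g'|`. As `f g'` is holomorphic and zero-free on `U`,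
`ln |f g'|` is harmonic there, and on `C²` functions `flatLaplacian` is Mathlib's Laplacian.
-/

/-- The flat Laplacian `Δ = ∂²/∂x² + ∂²/∂y²` on `ℂ ≃ ℝ²`, where the `x`-direction
is `1 : ℂ` and the `y`-direction is `I : ℂ`. -/
noncomputable def flatLaplacian (F : ℂ → ℝ) (z : ℂ) : ℝ :=
  fderiv ℝ (fun w => fderiv ℝ F w 1) z 1 +
    fderiv ℝ (fun w => fderiv ℝ F w Complex.I) z Complex.I

open InnerProductSpace Laplacian

theorem flatLaplacian_eq_laplacian {F : ℂ → ℝ} {z : ℂ} (hF : ContDiffAt ℝ 2 F z) :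
    flatLaplacian F z = Δ F z := by
  have hF' : DifferentiableAt ℝ (fderiv ℝ F) z :=
    (hF.fderiv_right (m := 1) le_rfl).differentiableAt one_ne_zero
  simp [flatLaplacian, laplacian_eq_iteratedFDeriv_complexPlane, iteratedFDeriv_two_apply,
    fderiv_clm_apply hF' (differentiableAt_const _)]

theorem InnerProductSpace.HarmonicAt.flatLaplacian_eq_zero {F : ℂ → ℝ} {z : ℂ}
    (hF : HarmonicAt F z) : flatLaplacian F z = 0 := by
  rw [flatLaplacian_eq_laplacian hF.1]
  exact hF.2.self_of_nhds

theorem rpow_quarter_mul_eq_sqrt {a b d : ℝ} (ha : 0 ≤ a) (hb : 0 < b) (hd : 0 ≤ d) :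
    ((4 * d / (a * b ^ 2)) ^ 2) ^ ((1 : ℝ) / 4) * (a * b / 2) = √(a * d) := by
  have hX : 0 ≤ 4 * d / (a * b ^ 2) := by positivity
  have hquarter : ((4 * d / (a * b ^ 2)) ^ 2) ^ ((1 : ℝ) / 4) = √(4 * d / (a * b ^ 2)) := by
    rw [← Real.rpow_natCast, ← Real.rpow_mul hX, Real.sqrt_eq_rpow]
    norm_num
  rw [hquarter, ← Real.sqrt_sq (by positivity : 0 ≤ a * b / 2), ← Real.sqrt_mul hX]
  rcases ha.eq_or_lt with rfl | ha
  · simp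
  · congr 1
    field_simp
    ring

/-- Flatness of Ricci's metric: for Weierstrass data `(f, g)` on an
open set `U ⊆ ℂ`, with `λ = |f|(1 + |g|²)/2` and
`K = −(4|g'| / (|f|(1 + |g|²)²))²`, the function `z ↦ ln((−K(z))^{1/4} λ(z))` is
harmonic on `U`: `Δ(ln((−K)^{1/4} λ)) = 0` on `U`.  This says that Ricci's
conformally changed metric `𝒢_Ricci = (−K)^{1/2} λ²(dx² + dy²)` is flat. -/
theorem ricci_metric_flat
    (U : Set ℂ) (hU : IsOpen U)
    (f g : ℂ → ℂ)
    (hf : DifferentiableOn ℂ f U) (hg : DifferentiableOn ℂ g U)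
    (hf0 : ∀ z ∈ U, f z ≠ 0) (hg' : ∀ z ∈ U, deriv g z ≠ 0)
    (lam K : ℂ → ℝ)
    (hlam : ∀ z, lam z = ‖f z‖ * (1 + ‖g z‖ ^ 2) / 2)
    (hK : ∀ z, K z = -(4 * ‖deriv g z‖ /
      (‖f z‖ * (1 + ‖g z‖ ^ 2) ^ 2)) ^ 2) :
    ∀ z ∈ U,
      flatLaplacian (fun w => Real.log ((-(K w)) ^ ((1 : ℝ) / 4) * lam w)) z = 0 := by
  intro z hz
  have hlog : (fun w => Real.log ((-(K w)) ^ ((1 : ℝ) / 4) * lam w)) =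
      (2 : ℝ)⁻¹ • fun w => Real.log ‖f w * deriv g w‖ := by
    funext w
    have hb : 0 < 1 + ‖g w‖ ^ 2 := by positivity
    rw [hK, hlam, neg_neg, rpow_quarter_mul_eq_sqrt (norm_nonneg _) hb (norm_nonneg _),
      Real.log_sqrt (by positivity), Pi.smul_apply, smul_eq_mul, norm_mul, div_eq_inv_mul]
  have hfz : AnalyticAt ℂ f z := hf.analyticAt (hU.mem_nhds hz)
  have hgz : AnalyticAt ℂ (deriv g) z := (hg.analyticAt (hU.mem_nhds hz)).deriv
  rw [hlog]
  apply HarmonicAt.flatLaplacian_eq_zero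
  exact ((hfz.mul hgz).harmonicAt_log_norm (mul_ne_zero (hf0 z hz) (hg' z hz))).const_smul
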